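/- arXiv:2211.14046 — 3 statements merged into one kernel-verified Lean document; each statement's English description precedes it below -/
import Mathlib

section
/- Let m_b > 0, σ ≥ 0, t > 0, and let a ≥ 0 and ε ∈ [0,1) satisfy a + ε/2 ≤ 1. Then ∫_{{k ∈ ℝ² : |k| ≥ σ}} (1 - e^{-t·ω(k)})² / ω(k)^{3+2a} dk ≤ (2π/(1-ε)) · t^{2a+ε} / ω(σ)^{1-ε}, where ω(k) = (|k|² + m_b²)^{1/2} and ω(σ) = (σ² + m_b²)^{1/2}. -/
open MeasureTheory Real
open Set Filter

lemma one_sub_exp_sq_le {x θ : ℝ} (hx : 0 < x) (hθ0 : 0 ≤ θ) (hθ2 : θ ≤ 2) :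
    (1 - Real.exp (-x)) ^ 2 ≤ x ^ θ := by
  have h0 : 0 ≤ 1 - Real.exp (-x) := by
    have : Real.exp (-x) ≤ 1 := Real.exp_le_one_iff.mpr (by linarith)
    linarith
  rcases le_total x 1 with h1 | h1
  · have h2 : 1 - Real.exp (-x) ≤ x := by nlinarith [Real.add_one_le_exp (-x)]
    calc (1 - Real.exp (-x)) ^ 2 ≤ x ^ 2 := by nlinarith
      _ = x ^ (2 : ℝ) := by rw [← Real.rpow_natCast x 2]; norm_num
      _ ≤ x ^ θ := Real.rpow_le_rpow_of_exponent_ge hx h1 hθ2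
  · have h2 : Real.exp (-x) ≤ 1 := Real.exp_le_one_iff.mpr (by linarith)
    have h3 : 0 < Real.exp (-x) := Real.exp_pos _
    calc (1 - Real.exp (-x)) ^ 2 ≤ 1 := by nlinarith
      _ ≤ x ^ θ := Real.one_le_rpow h1 hθ0

lemma radial_deriv (mb ε : ℝ) (hmb : 0 < mb) (hε1 : ε < 1) (r : ℝ) :
    HasDerivAt (fun r : ℝ => (r ^ 2 + mb ^ 2) ^ ((ε - 1) / 2) / (ε - 1))
      (r * (r ^ 2 + mb ^ 2) ^ ((ε - 3) / 2)) r := by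
  have hP : (0:ℝ) < r ^ 2 + mb ^ 2 := by positivity
  have h1 : HasDerivAt (fun r : ℝ => r ^ 2 + mb ^ 2) (2 * r) r := by
    simpa using ((hasDerivAt_pow 2 r).add_const (mb ^ 2))
  have h2 := (h1.rpow_const (p := (ε - 1) / 2) (Or.inl hP.ne')).div_const (ε - 1)
  refine h2.congr_deriv ?_
  have he : (ε - 1) / 2 - 1 = (ε - 3) / 2 := by ring
  rw [he]
  have hne : ε - 1 ≠ 0 := by linarith
  field_simp

lemma radial_tendsto (mb ε : ℝ) (hmb : 0 < mb) (hε1 : ε < 1) :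
    Tendsto (fun r : ℝ => (r ^ 2 + mb ^ 2) ^ ((ε - 1) / 2) / (ε - 1)) atTop (nhds 0) := by
  have h1 : Tendsto (fun r : ℝ => r ^ 2 + mb ^ 2) atTop atTop :=
    (tendsto_pow_atTop (by norm_num)).atTop_add tendsto_const_nhds
  have h2 : Tendsto (fun x : ℝ => x ^ (-((1 - ε) / 2))) atTop (nhds 0) :=
    tendsto_rpow_neg_atTop (by linarith)
  have h3 : Tendsto (fun r : ℝ => (r ^ 2 + mb ^ 2) ^ ((ε - 1) / 2)) atTop (nhds 0) := by
    have : (ε - 1) / 2 = -((1 - ε) / 2) := by ring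
    rw [this]
    exact h2.comp h1
  simpa using h3.div_const (ε - 1)

lemma radial_integrable (mb σ ε : ℝ) (hmb : 0 < mb) (hσ : 0 ≤ σ) (hε1 : ε < 1) :
    IntegrableOn (fun r : ℝ => r * (r ^ 2 + mb ^ 2) ^ ((ε - 3) / 2)) (Ioi σ) := by
  refine integrableOn_Ioi_deriv_of_nonneg' (fun r _ => radial_deriv mb ε hmb hε1 r)
    (fun r hr => ?_) (radial_tendsto mb ε hmb hε1)
  have : (0:ℝ) < r ^ 2 + mb ^ 2 := by positivity
  have hr0 : 0 ≤ r := le_trans hσ (le_of_lt hr)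
  positivity

lemma radial_integral (mb σ ε : ℝ) (hmb : 0 < mb) (hσ : 0 ≤ σ) (hε1 : ε < 1) :
    ∫ r in Ioi σ, r * (r ^ 2 + mb ^ 2) ^ ((ε - 3) / 2)
      = (σ ^ 2 + mb ^ 2) ^ ((ε - 1) / 2) / (1 - ε) := by
  rw [integral_Ioi_of_hasDerivAt_of_nonneg' (fun r _ => radial_deriv mb ε hmb hε1 r)
    (fun r hr => by
      have : (0:ℝ) < r ^ 2 + mb ^ 2 := by positivity
      have hr0 : 0 ≤ r := le_trans hσ (le_of_lt hr)
      positivity) (radial_tendsto mb ε hmb hε1)]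
  have hne : ε - 1 ≠ 0 := by linarith
  have hne' : (1:ℝ) - ε ≠ 0 := by linarith
  field_simp
  ring

lemma planar_integrable (mb ε : ℝ) (hmb : 0 < mb) (hε1 : ε < 1) :
    Integrable (fun k : EuclideanSpace ℝ (Fin 2) => (‖k‖ ^ 2 + mb ^ 2) ^ ((ε - 3) / 2)) := by
  set c : ℝ := min mb 1 with hc
  have hc0 : 0 < c := lt_min hmb one_pos
  have hnr : (Module.finrank ℝ (EuclideanSpace ℝ (Fin 2)) : ℝ) < 3 - ε := by
    rw [finrank_euclideanSpace_fin]; push_cast; linarith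
  have hint := (integrable_rpow_neg_one_add_norm_sq (E := EuclideanSpace ℝ (Fin 2))
    (μ := volume) hnr).const_mul ((c ^ 2) ^ ((ε - 3) / 2))
  refine hint.mono' ?_ (Filter.Eventually.of_forall fun x => ?_)
  · refine Continuous.aestronglyMeasurable ?_
    refine Continuous.rpow_const (by continuity) fun x => Or.inl ?_
    positivity
  · have hP : (0:ℝ) < ‖x‖ ^ 2 + mb ^ 2 := by positivity
    have h1 : (0:ℝ) < c ^ 2 * (1 + ‖x‖ ^ 2) := by positivity
    have h2 : c ^ 2 * (1 + ‖x‖ ^ 2) ≤ ‖x‖ ^ 2 + mb ^ 2 := by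
      have h3 : c ≤ mb := min_le_left _ _
      have h4 : c ≤ 1 := min_le_right _ _
      have h3' : c ^ 2 ≤ mb ^ 2 := by nlinarith
      have h4' : c ^ 2 ≤ 1 := by nlinarith
      nlinarith [sq_nonneg (‖x‖)]
    have h5 : (‖x‖ ^ 2 + mb ^ 2) ^ ((ε - 3) / 2) ≤ (c ^ 2 * (1 + ‖x‖ ^ 2)) ^ ((ε - 3) / 2) :=
      Real.rpow_le_rpow_of_nonpos h1 h2 (by linarith)
    have h6 : (c ^ 2 * (1 + ‖x‖ ^ 2)) ^ ((ε - 3) / 2)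
        = (c ^ 2) ^ ((ε - 3) / 2) * (1 + ‖x‖ ^ 2) ^ (-(3 - ε) / 2) := by
      rw [Real.mul_rpow (by positivity) (by positivity), show -(3 - ε) / 2 = (ε - 3) / 2 by ring]
    rw [Real.norm_of_nonneg (Real.rpow_nonneg hP.le _)]
    exact h5.trans h6.le

lemma planar_integral (mb σ ε : ℝ) (hmb : 0 < mb) (hσ : 0 ≤ σ) (hε1 : ε < 1) :
    ∫ k in {k : EuclideanSpace ℝ (Fin 2) | σ ≤ ‖k‖}, (‖k‖ ^ 2 + mb ^ 2) ^ ((ε - 3) / 2)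
      = 2 * Real.pi * ((σ ^ 2 + mb ^ 2) ^ ((ε - 1) / 2) / (1 - ε)) := by
  set G : ℝ → ℝ := fun r => (r ^ 2 + mb ^ 2) ^ ((ε - 3) / 2) with hG
  have hmeas : MeasurableSet {k : EuclideanSpace ℝ (Fin 2) | σ ≤ ‖k‖} :=
    (isClosed_le continuous_const continuous_norm).measurableSet
  have h1 : ∫ k in {k : EuclideanSpace ℝ (Fin 2) | σ ≤ ‖k‖}, (‖k‖ ^ 2 + mb ^ 2) ^ ((ε - 3) / 2)
      = ∫ k : EuclideanSpace ℝ (Fin 2), (Set.indicator (Ici σ) G) ‖k‖ := by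
    rw [← integral_indicator hmeas]
    rfl
  rw [h1, integral_fun_norm_addHaar volume (Set.indicator (Ici σ) G)]
  rw [finrank_euclideanSpace_fin]
  have hball : (volume (Metric.ball (0 : EuclideanSpace ℝ (Fin 2)) 1)).toReal = Real.pi := by
    rw [EuclideanSpace.volume_ball]
    simp only [Fintype.card_fin]
    rw [show ((2:ℕ):ℝ) / 2 + 1 = 2 by norm_num]
    rw [Real.Gamma_two]
    simp [Real.sq_sqrt Real.pi_nonneg, ENNReal.toReal_ofReal Real.pi_nonneg]
  rw [measureReal_def, hball]
  have h2 : ∫ y in Ioi (0:ℝ), y ^ (2 - 1) • Set.indicator (Ici σ) G y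
      = ∫ r in Ioi σ, r * (r ^ 2 + mb ^ 2) ^ ((ε - 3) / 2) := by
    simp only [smul_eq_mul]
    norm_num
    have e1 : (fun y : ℝ => y * Set.indicator (Ici σ) G y)
        = Set.indicator (Ici σ) (fun y => y * G y) := by
      ext y
      by_cases h : y ∈ Ici σ
      · simp [Set.indicator_of_mem h]
      · simp [Set.indicator_of_notMem h]
    rw [e1, setIntegral_indicator measurableSet_Ici]
    refine setIntegral_congr_set ?_
    have e2 : (Ioi (0:ℝ) ∩ Ici σ : Set ℝ) =ᵐ[volume] (Ioi (0:ℝ) ∩ Ioi σ : Set ℝ) :=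
      ae_eq_set_inter (ae_eq_refl _) Ioi_ae_eq_Ici.symm
    have e3 : (Ioi (0:ℝ) ∩ Ioi σ : Set ℝ) = Ioi σ := by
      rw [Set.Ioi_inter_Ioi, max_eq_right hσ]
    rw [e3] at e2
    exact e2
  rw [h2, radial_integral mb σ ε hmb hσ hε1]
  simp [smul_eq_mul]
  ring

/-- For `m_b > 0`, `σ ≥ 0`, `t > 0`, `a ≥ 0`, `ε ∈ [0,1)` with `a + ε/2 ≤ 1`, one has
`∫_{|k| ≥ σ} (1 - e^{-tω(k)})² / ω(k)^{3+2a} dk ≤ (2π/(1-ε)) t^{2a+ε} / ω(σ)^{1-ε}`,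
where `ω(k) = √(|k|² + m_b²)` and `ω(σ) = √(σ² + m_b²)`. -/
theorem UtN_tnorm_bound (mb σ t a ε : ℝ) (hmb : 0 < mb) (hσ : 0 ≤ σ) (ht : 0 < t)
    (ha : 0 ≤ a) (hε0 : 0 ≤ ε) (hε1 : ε < 1) (haε : a + ε / 2 ≤ 1) :
    (∫ k in {k : EuclideanSpace ℝ (Fin 2) | σ ≤ ‖k‖},
        (1 - Real.exp (-t * Real.sqrt (‖k‖ ^ 2 + mb ^ 2))) ^ 2 /
          Real.sqrt (‖k‖ ^ 2 + mb ^ 2) ^ (3 + 2 * a))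
      ≤ (2 * Real.pi / (1 - ε)) * t ^ (2 * a + ε) / Real.sqrt (σ ^ 2 + mb ^ 2) ^ (1 - ε) := by
  have hb : ∀ k : EuclideanSpace ℝ (Fin 2),
      (1 - Real.exp (-t * Real.sqrt (‖k‖ ^ 2 + mb ^ 2))) ^ 2 /
        Real.sqrt (‖k‖ ^ 2 + mb ^ 2) ^ (3 + 2 * a)
      ≤ t ^ (2 * a + ε) * (‖k‖ ^ 2 + mb ^ 2) ^ ((ε - 3) / 2) := by
    intro k
    set P := ‖k‖ ^ 2 + mb ^ 2 with hPdef
    have hP : 0 < P := by positivity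
    set w := Real.sqrt P with hw
    have hw0 : 0 < w := Real.sqrt_pos.mpr hP
    have h1 : (1 - Real.exp (-(t * w))) ^ 2 ≤ (t * w) ^ (2 * a + ε) :=
      one_sub_exp_sq_le (mul_pos ht hw0) (by linarith) (by linarith)
    have h2 : (1 - Real.exp (-t * w)) ^ 2 / w ^ (3 + 2 * a)
        ≤ (t * w) ^ (2 * a + ε) / w ^ (3 + 2 * a) := by
      rw [neg_mul]
      gcongr
    refine h2.trans (le_of_eq ?_)
    rw [Real.mul_rpow ht.le hw0.le, mul_div_assoc, ← Real.rpow_sub hw0,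
      show 2 * a + ε - (3 + 2 * a) = ε - 3 by ring]
    congr 1
    rw [show (ε - 3) / 2 = 1 / 2 * (ε - 3) by ring, Real.rpow_mul hP.le, ← Real.sqrt_eq_rpow]
  have hnonneg : ∀ k : EuclideanSpace ℝ (Fin 2),
      0 ≤ (1 - Real.exp (-t * Real.sqrt (‖k‖ ^ 2 + mb ^ 2))) ^ 2 /
        Real.sqrt (‖k‖ ^ 2 + mb ^ 2) ^ (3 + 2 * a) := by
    intro k
    have hP : (0:ℝ) < ‖k‖ ^ 2 + mb ^ 2 := by positivity
    have hw0 : 0 < Real.sqrt (‖k‖ ^ 2 + mb ^ 2) := Real.sqrt_pos.mpr hP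
    positivity
  have hint : IntegrableOn
      (fun k : EuclideanSpace ℝ (Fin 2) => t ^ (2 * a + ε) * (‖k‖ ^ 2 + mb ^ 2) ^ ((ε - 3) / 2))
      {k : EuclideanSpace ℝ (Fin 2) | σ ≤ ‖k‖} :=
    ((planar_integrable mb ε hmb hε1).const_mul _).integrableOn
  have step1 := integral_mono_of_nonneg (μ := volume.restrict {k : EuclideanSpace ℝ (Fin 2) | σ ≤ ‖k‖})
    (ae_of_all _ hnonneg) hint (ae_of_all _ hb)
  refine step1.trans (le_of_eq ?_)
  rw [integral_const_mul, planar_integral mb σ ε hmb hσ hε1]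
  have hQ : (0:ℝ) < σ ^ 2 + mb ^ 2 := by positivity
  have hs : Real.sqrt (σ ^ 2 + mb ^ 2) ^ (1 - ε) = (σ ^ 2 + mb ^ 2) ^ ((1 - ε) / 2) := by
    rw [show (1 - ε) / 2 = 1 / 2 * (1 - ε) by ring, Real.rpow_mul hQ.le, ← Real.sqrt_eq_rpow]
  have hinv : (σ ^ 2 + mb ^ 2) ^ ((ε - 1) / 2) = ((σ ^ 2 + mb ^ 2) ^ ((1 - ε) / 2))⁻¹ := by
    rw [← Real.rpow_neg hQ.le, show -((1 - ε) / 2) = (ε - 1) / 2 by ring]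
  rw [hs, hinv]
  have hpos : (0:ℝ) < (σ ^ 2 + mb ^ 2) ^ ((1 - ε) / 2) := Real.rpow_pos_of_pos hQ _
  have hne : (1:ℝ) - ε ≠ 0 := by linarith
  field_simp
end

section
/- Let m_b > 0, m_p ≥ 0 and σ > 0, and set ω(k) = (|k|² + m_b²)^{1/2} and ψ(k) = (|k|² + m_p²)^{1/2} - m_p for k ∈ ℝ². Then ∫_{{k ∈ ℝ² : |k| < σ}} ψ(k) / (ω(k)² · (ω(k) + ψ(k))) dk ≤ π · log((σ² + m_b²)^{1/2} / m_b). -/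
open MeasureTheory Real

private lemma polar_ball_integral (mb σ : ℝ) (hmb : 0 < mb) (hσ : 0 < σ) :
    ∫ k in Metric.ball (0 : EuclideanSpace ℝ (Fin 2)) σ, (‖k‖ ^ 2 + mb ^ 2)⁻¹
      = 2 * π * ∫ y in (0:ℝ)..σ, y / (y ^ 2 + mb ^ 2) := by
  set f : ℝ → ℝ := (Set.Iio σ).indicator (fun r => (r ^ 2 + mb ^ 2)⁻¹) with hf
  have h1 : ∫ k in Metric.ball (0 : EuclideanSpace ℝ (Fin 2)) σ, (‖k‖ ^ 2 + mb ^ 2)⁻¹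
      = ∫ k : EuclideanSpace ℝ (Fin 2), f ‖k‖ := by
    rw [← integral_indicator measurableSet_ball]
    congr 1
    ext k
    by_cases h : ‖k‖ < σ
    · simp [hf, Set.indicator_of_mem, h, Metric.mem_ball, dist_zero_right]
    · simp [hf, Set.indicator_of_notMem, h, Metric.mem_ball, dist_zero_right]
  rw [h1, integral_fun_norm_addHaar (volume : Measure (EuclideanSpace ℝ (Fin 2))) f]
  have hdim : Module.finrank ℝ (EuclideanSpace ℝ (Fin 2)) = 2 := finrank_euclideanSpace_fin
  rw [hdim]
  have hvol : (volume (Metric.ball (0 : EuclideanSpace ℝ (Fin 2)) 1)).toReal = π := by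
    rw [EuclideanSpace.volume_ball]
    simp [Real.Gamma_two, Real.sq_sqrt Real.pi_pos.le,
      ENNReal.toReal_ofReal Real.pi_pos.le, show (1:ℝ)+1 = 2 by norm_num]
  rw [measureReal_def, hvol]
  have h2 : ∫ y in Set.Ioi (0:ℝ), y ^ (2 - 1) • f y = ∫ y in (0:ℝ)..σ, y / (y ^ 2 + mb ^ 2) := by
    have : ∀ y : ℝ, y ^ (2-1) • f y
        = (Set.Iio σ).indicator (fun y => y / (y ^ 2 + mb ^ 2)) y := by
      intro y
      by_cases h : y < σ
      · simp [hf, Set.indicator_of_mem, h, smul_eq_mul, div_eq_mul_inv]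
      · simp [hf, Set.indicator_of_notMem, h]
    simp_rw [this]
    rw [setIntegral_indicator measurableSet_Iio]
    have : Set.Ioi (0:ℝ) ∩ Set.Iio σ = Set.Ioo 0 σ := Set.Ioi_inter_Iio
    rw [this, ← integral_Ioc_eq_integral_Ioo, ← intervalIntegral.integral_of_le hσ.le]
  rw [h2]
  simp only [smul_eq_mul, nsmul_eq_mul]
  ring

/-- For `m_b > 0`, `m_p ≥ 0` and `σ > 0`, with `ω(k) = √(|k|² + m_b²)` and
`ψ(k) = √(|k|² + m_p²) - m_p`:
`∫_{|k| < σ} ψ(k)/(ω(k)²(ω(k)+ψ(k))) dk ≤ π log(√(σ² + m_b²)/m_b)`. -/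
theorem renorm_difference_log_bound (mb mp σ : ℝ) (hmb : 0 < mb) (hmp : 0 ≤ mp)
    (hσ : 0 < σ) :
    (∫ k in {k : EuclideanSpace ℝ (Fin 2) | ‖k‖ < σ},
        (Real.sqrt (‖k‖ ^ 2 + mp ^ 2) - mp) /
          (Real.sqrt (‖k‖ ^ 2 + mb ^ 2) ^ 2 *
            (Real.sqrt (‖k‖ ^ 2 + mb ^ 2) + (Real.sqrt (‖k‖ ^ 2 + mp ^ 2) - mp))))
      ≤ Real.pi * Real.log (Real.sqrt (σ ^ 2 + mb ^ 2) / mb) := by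
  have hball : {k : EuclideanSpace ℝ (Fin 2) | ‖k‖ < σ}
      = Metric.ball (0 : EuclideanSpace ℝ (Fin 2)) σ := by
    ext k; simp [Metric.mem_ball, dist_zero_right]
  -- basic estimates
  have homega : ∀ k : EuclideanSpace ℝ (Fin 2), 0 < Real.sqrt (‖k‖ ^ 2 + mb ^ 2) :=
    fun k => Real.sqrt_pos.mpr (by positivity)
  have hpsi0 : ∀ k : EuclideanSpace ℝ (Fin 2), 0 ≤ Real.sqrt (‖k‖ ^ 2 + mp ^ 2) - mp := by
    intro k
    have h := Real.sqrt_le_sqrt (show mp ^ 2 ≤ ‖k‖ ^ 2 + mp ^ 2 by nlinarith [sq_nonneg ‖k‖])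
    rw [Real.sqrt_sq hmp] at h
    linarith
  have hpsiomega : ∀ k : EuclideanSpace ℝ (Fin 2),
      Real.sqrt (‖k‖ ^ 2 + mp ^ 2) - mp ≤ Real.sqrt (‖k‖ ^ 2 + mb ^ 2) := by
    intro k
    have h1 := Real.sqrt_le_sqrt
      (show ‖k‖ ^ 2 + mp ^ 2 ≤ (‖k‖ + mp) ^ 2 by nlinarith [norm_nonneg k, sq_nonneg mp])
    rw [Real.sqrt_sq (by positivity)] at h1
    have h2 := Real.sqrt_le_sqrt (show ‖k‖ ^ 2 ≤ ‖k‖ ^ 2 + mb ^ 2 by nlinarith)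
    rw [Real.sqrt_sq (norm_nonneg k)] at h2
    linarith
  have hsq : ∀ k : EuclideanSpace ℝ (Fin 2),
      Real.sqrt (‖k‖ ^ 2 + mb ^ 2) ^ 2 = ‖k‖ ^ 2 + mb ^ 2 :=
    fun k => Real.sq_sqrt (by positivity)
  -- pointwise bound
  have hpt : ∀ k : EuclideanSpace ℝ (Fin 2),
      (Real.sqrt (‖k‖ ^ 2 + mp ^ 2) - mp) /
          (Real.sqrt (‖k‖ ^ 2 + mb ^ 2) ^ 2 *
            (Real.sqrt (‖k‖ ^ 2 + mb ^ 2) + (Real.sqrt (‖k‖ ^ 2 + mp ^ 2) - mp)))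
        ≤ 1 / 2 * (‖k‖ ^ 2 + mb ^ 2)⁻¹ := by
    intro k
    set ω := Real.sqrt (‖k‖ ^ 2 + mb ^ 2)
    set ψ := Real.sqrt (‖k‖ ^ 2 + mp ^ 2) - mp
    have hω := homega k
    have hψ := hpsi0 k
    have hψω := hpsiomega k
    have hω0 : ω ≠ 0 := hω.ne'
    rw [← hsq k, div_le_iff₀ (by positivity)]
    have key : (1:ℝ)/2 * (ω ^ 2)⁻¹ * (ω ^ 2 * (ω + ψ)) = (ω + ψ)/2 := by
      field_simp
    rw [key]
    linarith
  -- continuity and integrability on the ball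
  have hcont_den : Continuous fun k : EuclideanSpace ℝ (Fin 2) =>
      Real.sqrt (‖k‖ ^ 2 + mb ^ 2) ^ 2 *
        (Real.sqrt (‖k‖ ^ 2 + mb ^ 2) + (Real.sqrt (‖k‖ ^ 2 + mp ^ 2) - mp)) := by
    apply Continuous.mul
    · exact ((continuous_norm.pow 2).add continuous_const).sqrt.pow 2
    · exact (((continuous_norm.pow 2).add continuous_const).sqrt).add
        ((((continuous_norm.pow 2).add continuous_const).sqrt).sub continuous_const)
  have hcont_h : Continuous fun k : EuclideanSpace ℝ (Fin 2) =>
      (Real.sqrt (‖k‖ ^ 2 + mp ^ 2) - mp) /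
          (Real.sqrt (‖k‖ ^ 2 + mb ^ 2) ^ 2 *
            (Real.sqrt (‖k‖ ^ 2 + mb ^ 2) + (Real.sqrt (‖k‖ ^ 2 + mp ^ 2) - mp))) := by
    apply Continuous.div
    · exact (((continuous_norm.pow 2).add continuous_const).sqrt).sub continuous_const
    · exact hcont_den
    · intro k
      have := homega k; have := hpsi0 k
      positivity
  have hcont_g : Continuous fun k : EuclideanSpace ℝ (Fin 2) =>
      (1:ℝ) / 2 * (‖k‖ ^ 2 + mb ^ 2)⁻¹ := by
    apply Continuous.mul continuous_const
    exact ((continuous_norm.pow 2).add continuous_const).inv₀ (fun k => (by positivity : ‖k‖ ^ 2 + mb ^ 2 ≠ 0))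
  have hint_h : IntegrableOn (fun k : EuclideanSpace ℝ (Fin 2) =>
      (Real.sqrt (‖k‖ ^ 2 + mp ^ 2) - mp) /
          (Real.sqrt (‖k‖ ^ 2 + mb ^ 2) ^ 2 *
            (Real.sqrt (‖k‖ ^ 2 + mb ^ 2) + (Real.sqrt (‖k‖ ^ 2 + mp ^ 2) - mp))))
      (Metric.ball 0 σ) volume :=
    (hcont_h.continuousOn.integrableOn_compact (isCompact_closedBall _ _)).mono_set
      Metric.ball_subset_closedBall
  have hint_g : IntegrableOn (fun k : EuclideanSpace ℝ (Fin 2) =>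
      (1:ℝ) / 2 * (‖k‖ ^ 2 + mb ^ 2)⁻¹) (Metric.ball 0 σ) volume :=
    (hcont_g.continuousOn.integrableOn_compact (isCompact_closedBall _ _)).mono_set
      Metric.ball_subset_closedBall
  rw [hball]
  calc (∫ k in Metric.ball (0 : EuclideanSpace ℝ (Fin 2)) σ,
        (Real.sqrt (‖k‖ ^ 2 + mp ^ 2) - mp) /
          (Real.sqrt (‖k‖ ^ 2 + mb ^ 2) ^ 2 *
            (Real.sqrt (‖k‖ ^ 2 + mb ^ 2) + (Real.sqrt (‖k‖ ^ 2 + mp ^ 2) - mp))))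
      ≤ ∫ k in Metric.ball (0 : EuclideanSpace ℝ (Fin 2)) σ,
          (1:ℝ) / 2 * (‖k‖ ^ 2 + mb ^ 2)⁻¹ :=
        setIntegral_mono_on hint_h hint_g measurableSet_ball (fun k _ => hpt k)
    _ = 1 / 2 * ∫ k in Metric.ball (0 : EuclideanSpace ℝ (Fin 2)) σ,
          (‖k‖ ^ 2 + mb ^ 2)⁻¹ := integral_const_mul _ _
    _ = 1 / 2 * (2 * π * ∫ y in (0:ℝ)..σ, y / (y ^ 2 + mb ^ 2)) := by
        rw [polar_ball_integral mb σ hmb hσ]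
    _ = π * Real.log (Real.sqrt (σ ^ 2 + mb ^ 2) / mb) := by
        have key : ∀ y : ℝ, HasDerivAt (fun y => 1/2 * Real.log (y^2 + mb^2))
            (y / (y^2+mb^2)) y := by
          intro y
          have h1 : HasDerivAt (fun y : ℝ => y^2 + mb^2) (2*y) y := by
            simpa using (hasDerivAt_pow 2 y).add_const (mb^2)
          have h2 := (h1.log (by positivity)).const_mul (1/2 : ℝ)
          exact h2.congr_deriv (by ring)
        rw [intervalIntegral.integral_eq_sub_of_hasDerivAt (fun y _ => key y)
          (Continuous.intervalIntegrable
            (continuous_id.div (by continuity) (fun y => by positivity)) _ _)]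
        rw [Real.log_div (Real.sqrt_ne_zero'.mpr (by positivity)) hmb.ne',
          Real.log_sqrt (by positivity)]
        have : Real.log (mb ^ 2) = 2 * Real.log mb := by
          rw [Real.log_pow]; push_cast; ring
        simp only [ne_eq, OfNat.ofNat_ne_zero, not_false_eq_true, zero_pow, zero_add]
        rw [this]
        ring
end

section
/- Let m_b > 0, m_p > 0 and ρ > 0, and set ω(k) = (|k|² + m_b²)^{1/2} and ψ(k) = (|k|² + m_p²)^{1/2} - m_p for k ∈ ℝ². Then ∫_{{k ∈ ℝ² : |k| < ρ}} ψ(k) / (ω(k)² · (ω(k) + ψ(k))) dk ≤ π · ρ / m_p. -/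
open MeasureTheory Real

set_option maxHeartbeats 1600000 in
/-- For `m_b > 0`, `m_p > 0` and `ρ > 0`, with `ω(k) = √(|k|² + m_b²)` and
`ψ(k) = √(|k|² + m_p²) - m_p`:
`∫_{|k| < ρ} ψ(k)/(ω(k)²(ω(k)+ψ(k))) dk ≤ π ρ / m_p`. -/
theorem renorm_difference_linear_bound (mb mp R : ℝ) (hmb : 0 < mb) (hmp : 0 < mp)
    (hR : 0 < R) :
    (∫ k in {k : EuclideanSpace ℝ (Fin 2) | ‖k‖ < R},
        (Real.sqrt (‖k‖ ^ 2 + mp ^ 2) - mp) /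
          (Real.sqrt (‖k‖ ^ 2 + mb ^ 2) ^ 2 *
            (Real.sqrt (‖k‖ ^ 2 + mb ^ 2) + (Real.sqrt (‖k‖ ^ 2 + mp ^ 2) - mp))))
      ≤ Real.pi * R / mp := by
  have hball : {k : EuclideanSpace ℝ (Fin 2) | ‖k‖ < R} = Metric.ball 0 R := by
    ext k; simp [Metric.mem_ball, dist_zero_right]
  set f : EuclideanSpace ℝ (Fin 2) → ℝ := fun k =>
      (Real.sqrt (‖k‖ ^ 2 + mp ^ 2) - mp) /
        (Real.sqrt (‖k‖ ^ 2 + mb ^ 2) ^ 2 *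
          (Real.sqrt (‖k‖ ^ 2 + mb ^ 2) + (Real.sqrt (‖k‖ ^ 2 + mp ^ 2) - mp))) with hf
  set g : EuclideanSpace ℝ (Fin 2) → ℝ :=
      fun k => (2 * mp * Real.sqrt (‖k‖ ^ 2 + mb ^ 2))⁻¹ with hg
  -- basic pointwise facts
  have hω : ∀ k : EuclideanSpace ℝ (Fin 2), mb ≤ Real.sqrt (‖k‖ ^ 2 + mb ^ 2) := by
    intro k
    have : Real.sqrt (mb ^ 2) ≤ Real.sqrt (‖k‖ ^ 2 + mb ^ 2) :=
      Real.sqrt_le_sqrt (by nlinarith [sq_nonneg ‖k‖])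
    rwa [Real.sqrt_sq hmb.le] at this
  have hψ : ∀ k : EuclideanSpace ℝ (Fin 2), 0 ≤ Real.sqrt (‖k‖ ^ 2 + mp ^ 2) - mp := by
    intro k
    have : Real.sqrt (mp ^ 2) ≤ Real.sqrt (‖k‖ ^ 2 + mp ^ 2) :=
      Real.sqrt_le_sqrt (by nlinarith [sq_nonneg ‖k‖])
    rw [Real.sqrt_sq hmp.le] at this
    linarith
  have hωsq : ∀ k : EuclideanSpace ℝ (Fin 2),
      Real.sqrt (‖k‖ ^ 2 + mb ^ 2) ^ 2 = ‖k‖ ^ 2 + mb ^ 2 := fun k =>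
    Real.sq_sqrt (by positivity)
  have hψsq : ∀ k : EuclideanSpace ℝ (Fin 2),
      Real.sqrt (‖k‖ ^ 2 + mp ^ 2) ^ 2 = ‖k‖ ^ 2 + mp ^ 2 := fun k =>
    Real.sq_sqrt (by positivity)
  -- pointwise bound f ≤ g
  have hpt : ∀ k : EuclideanSpace ℝ (Fin 2), f k ≤ g k := by
    intro k
    have h1 : mb ≤ Real.sqrt (‖k‖ ^ 2 + mb ^ 2) := hω k
    have h2 : 0 ≤ Real.sqrt (‖k‖ ^ 2 + mp ^ 2) - mp := hψ k
    set ω := Real.sqrt (‖k‖ ^ 2 + mb ^ 2) with hωdef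
    set ψ := Real.sqrt (‖k‖ ^ 2 + mp ^ 2) - mp with hψdef
    have hωpos : 0 < ω := lt_of_lt_of_le hmb h1
    have hkey : ψ * (ψ + 2 * mp) = ‖k‖ ^ 2 := by
      have h3 := hψsq k
      nlinarith [h3]
    have hden : 0 < ω ^ 2 * (ω + ψ) := by positivity
    have hden2 : 0 < 2 * mp * ω := by positivity
    have hg' : g k = 1 / (2 * mp * ω) := by rw [hg, one_div]
    rw [hf, hg', div_le_div_iff₀ hden hden2]
    have hω2 : ω ^ 2 = ‖k‖ ^ 2 + mb ^ 2 := hωsq k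
    nlinarith [sq_nonneg ψ, hkey, hω2, mul_nonneg (mul_nonneg h2 h2) hωpos.le,
      mul_nonneg (sq_nonneg mb) hωpos.le]
  -- continuity
  have hωcont : Continuous fun k : EuclideanSpace ℝ (Fin 2) =>
      Real.sqrt (‖k‖ ^ 2 + mb ^ 2) :=
    Real.continuous_sqrt.comp (by continuity)
  have hψcont : Continuous fun k : EuclideanSpace ℝ (Fin 2) =>
      Real.sqrt (‖k‖ ^ 2 + mp ^ 2) - mp :=
    (Real.continuous_sqrt.comp (by continuity)).sub continuous_const
  have hfcont : Continuous f := by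
    apply Continuous.div hψcont ((hωcont.pow 2).mul (hωcont.add hψcont))
    intro k
    have h1 := hω k
    have h2 := hψ k
    have h3 : 0 < Real.sqrt (‖k‖ ^ 2 + mb ^ 2) := lt_of_lt_of_le hmb h1
    exact ne_of_gt (mul_pos (pow_pos h3 2) (add_pos_of_pos_of_nonneg h3 h2))
  have hgcont : Continuous g := by
    apply Continuous.inv₀ (continuous_const.mul hωcont)
    intro k
    have h1 := hω k
    have h3 : 0 < Real.sqrt (‖k‖ ^ 2 + mb ^ 2) := lt_of_lt_of_le hmb h1
    exact ne_of_gt (mul_pos (by linarith) h3)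
  -- integrability on the ball
  have hfint : IntegrableOn f (Metric.ball 0 R) volume :=
    (hfcont.continuousOn.integrableOn_compact (isCompact_closedBall 0 R)).mono_set
      Metric.ball_subset_closedBall
  have hgint : IntegrableOn g (Metric.ball 0 R) volume :=
    (hgcont.continuousOn.integrableOn_compact (isCompact_closedBall 0 R)).mono_set
      Metric.ball_subset_closedBall
  rw [hball]
  have step1 : ∫ k in Metric.ball (0 : EuclideanSpace ℝ (Fin 2)) R, f k
      ≤ ∫ k in Metric.ball (0 : EuclideanSpace ℝ (Fin 2)) R, g k :=
    setIntegral_mono_on hfint hgint measurableSet_ball (fun k _ => hpt k)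
  refine le_trans step1 ?_
  -- express as integral of a radial function
  set F : ℝ → ℝ := fun r => if r < R then (2 * mp * Real.sqrt (r ^ 2 + mb ^ 2))⁻¹ else 0
    with hF
  have hind : ∫ k in Metric.ball (0 : EuclideanSpace ℝ (Fin 2)) R, g k
      = ∫ x : EuclideanSpace ℝ (Fin 2), F ‖x‖ := by
    rw [← integral_indicator measurableSet_ball]
    congr 1
    ext x
    by_cases hx : ‖x‖ < R
    · rw [Set.indicator_of_mem (by simpa [Metric.mem_ball, dist_zero_right] using hx), hF]
      simp [hx, hg]
    · rw [Set.indicator_of_notMem (by simpa [Metric.mem_ball, dist_zero_right] using hx), hF]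
      simp [hx]
  rw [hind, MeasureTheory.integral_fun_norm_addHaar volume F]
  have hdim : Module.finrank ℝ (EuclideanSpace ℝ (Fin 2)) = 2 := finrank_euclideanSpace_fin
  rw [hdim]
  have hvol : (volume (Metric.ball (0 : EuclideanSpace ℝ (Fin 2)) 1)).toReal = π := by
    rw [EuclideanSpace.volume_ball]
    simp only [Fintype.card_fin]
    norm_num [Real.Gamma_two, Real.sq_sqrt Real.pi_pos.le,
      ENNReal.toReal_ofReal Real.pi_pos.le]
  rw [measureReal_def, hvol]
  -- bound the radial integral
  have hI : ∫ y in Set.Ioi (0 : ℝ), y ^ (2 - 1) • F y ≤ (2 * mp)⁻¹ * R := by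
    set b : ℝ → ℝ := Set.indicator (Set.Iio R) (fun _ => (2 * mp)⁻¹) with hb
    have hble : ∀ y ∈ Set.Ioi (0 : ℝ), y ^ (2 - 1) • F y ≤ b y := by
      intro y hy
      have hy0 : 0 < y := hy
      simp only [pow_one, smul_eq_mul, hF, hb]
      by_cases hyR : y < R
      · rw [if_pos hyR, Set.indicator_of_mem (show y ∈ Set.Iio R from hyR)]
        have hs : y ≤ Real.sqrt (y ^ 2 + mb ^ 2) := by
          have : Real.sqrt (y ^ 2) ≤ Real.sqrt (y ^ 2 + mb ^ 2) :=
            Real.sqrt_le_sqrt (by nlinarith [sq_nonneg mb])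
          rwa [Real.sqrt_sq hy0.le] at this
        have hspos : 0 < Real.sqrt (y ^ 2 + mb ^ 2) := lt_of_lt_of_le hy0 hs
        have h21 : (2 - 1 : ℕ) = 1 := rfl
        rw [h21, pow_one, inv_eq_one_div, inv_eq_one_div, mul_one_div,
          div_le_div_iff₀ (by positivity) (by positivity)]
        nlinarith
      · rw [if_neg hyR, Set.indicator_of_notMem (by simpa using hyR)]
        simp
    have hbint : IntegrableOn b (Set.Ioi (0 : ℝ)) volume := by
      rw [hb, IntegrableOn, integrable_indicator_iff measurableSet_Iio]
      apply (integrableOn_const_iff enorm_ne_top).2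
      right
      rw [Measure.restrict_apply measurableSet_Iio, Set.Iio_inter_Ioi]
      simp [Real.volume_Ioo]
    have hcont2 : Continuous fun y : ℝ => (2 * mp * Real.sqrt (y ^ 2 + mb ^ 2))⁻¹ := by
      apply Continuous.inv₀
        (continuous_const.mul (Real.continuous_sqrt.comp
          ((continuous_pow 2).add continuous_const)))
      intro y
      have h : Real.sqrt (mb ^ 2) ≤ Real.sqrt (y ^ 2 + mb ^ 2) :=
        Real.sqrt_le_sqrt (by nlinarith [sq_nonneg y])
      rw [Real.sqrt_sq hmb.le] at h
      have h2 : 0 < Real.sqrt (y ^ 2 + mb ^ 2) := lt_of_lt_of_le hmb h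
      exact ne_of_gt (mul_pos (by positivity : (0:ℝ) < 2 * mp) h2)
    have hFmeas : Measurable F :=
      Measurable.ite measurableSet_Iio hcont2.measurable measurable_const
    have hhint : IntegrableOn (fun y => y ^ (2 - 1) • F y) (Set.Ioi (0 : ℝ)) volume := by
      apply Integrable.mono' hbint
      · exact ((measurable_id.pow_const _).smul hFmeas).aestronglyMeasurable
      · refine (ae_restrict_iff' measurableSet_Ioi).2 (ae_of_all _ fun y hy => ?_)
        have h0 : (0 : ℝ) ≤ y ^ (2 - 1) • F y := by
          have hy0 : (0 : ℝ) < y := hy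
          simp only [pow_one, smul_eq_mul, hF]
          by_cases hyR : y < R
          · rw [if_pos hyR]; positivity
          · rw [if_neg hyR]; simp
        rw [Real.norm_eq_abs, abs_of_nonneg h0]
        exact hble y hy
    calc ∫ y in Set.Ioi (0 : ℝ), y ^ (2 - 1) • F y
        ≤ ∫ y in Set.Ioi (0 : ℝ), b y :=
          setIntegral_mono_on hhint hbint measurableSet_Ioi hble
      _ = (2 * mp)⁻¹ * R := by
          rw [hb, integral_indicator measurableSet_Iio,
            setIntegral_const, measureReal_def, Measure.restrict_apply measurableSet_Iio,
            Set.Iio_inter_Ioi, Real.volume_Ioo, smul_eq_mul]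
          rw [ENNReal.toReal_ofReal (by linarith), mul_comm]
          ring_nf
  have hπ : (0 : ℝ) ≤ π := Real.pi_pos.le
  rw [nsmul_eq_mul, smul_eq_mul]
  push_cast
  have h1 : π * (∫ y in Set.Ioi (0 : ℝ), y ^ (2 - 1) • F y) ≤ π * ((2 * mp)⁻¹ * R) :=
    mul_le_mul_of_nonneg_left hI hπ
  have h2 : 2 * (π * ((2 * mp)⁻¹ * R)) = π * R / mp := by rw [div_eq_mul_inv, mul_inv]; ring
  linarith
end
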